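/- Let Σ be a finite signature, f a function symbol of arity k not in Σ, and ψ a case-1 regular clause over Σ ∪ {f} (i.e., ψ is a disjunction of equations and negated equations between (Σ∪{f})-terms without ITE, each equation contains at most one occurrence of f, and f occurs only in non-negated equations of ψ). Then the set {w ∈ T(Σ, {x1,…,xk}) : ψ{w/f} is valid} is a regular tree language over Σ ∪ {x1,…,xk} (with x1,…,xk treated as constants). -/

import Mathlib

namespace SyGuS

/-- Terms over a ranked alphabet: symbols `F`, each of arity `ar f`. -/
inductive Tm (F : Type) (ar : F → ℕ) : Type
  | app (f : F) (args : Fin (ar f) → Tm F ar) : Tm F ar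

/-- Arity function on `F ⊕ Fin k`: the `k` extra symbols are constants
(the variables `x₁,…,x_k`, treated as constants). -/
abbrev varAr {F : Type} (ar : F → ℕ) (k : ℕ) : F ⊕ Fin k → ℕ := Sum.elim ar fun _ => 0

/-- Arity function on `F ⊕ Unit`: the extra symbol is the function symbol `f` of arity `k`. -/
abbrev fAr {F : Type} (ar : F → ℕ) (k : ℕ) : F ⊕ Unit → ℕ := Sum.elim ar fun _ => k

/-- A (nonempty) first-order structure for the ranked alphabet `(F, ar)`. -/
structure Str (F : Type) (ar : F → ℕ) : Type 1 where
  D : Type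
  [nonemptyD : Nonempty D]
  interp : (f : F) → (Fin (ar f) → D) → D

attribute [instance] Str.nonemptyD

/-- Evaluation of a ground term in a structure. -/
def Tm.eval {F : Type} {ar : F → ℕ} (M : Str F ar) : Tm F ar → M.D
  | .app f args => M.interp f fun i => (args i).eval M

/-- First-order substitution: replace the variables `x₁,…,x_k` by terms. -/
def Tm.instVars {F : Type} {ar : F → ℕ} {k : ℕ} (σ : Fin k → Tm F ar) :
    Tm (F ⊕ Fin k) (varAr ar k) → Tm F ar
  | .app (Sum.inl g) args => .app g fun i => Tm.instVars σ (args i)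
  | .app (Sum.inr i) _ => σ i

/-- Second-order substitution `·{w/f}`: replace every application `f(s₁,…,s_k)` of the
distinguished symbol `f` by `w{s₁/x₁,…,s_k/x_k}`. -/
def Tm.soSubst {F : Type} {ar : F → ℕ} {k : ℕ} (w : Tm (F ⊕ Fin k) (varAr ar k)) :
    Tm (F ⊕ Unit) (fAr ar k) → Tm F ar
  | .app (Sum.inl g) args => .app g fun i => Tm.soSubst w (args i)
  | .app (Sum.inr _) args => Tm.instVars (fun i => Tm.soSubst w (args i)) w

/-- Renaming of symbols along an arity-preserving map. -/
def Tm.rename {F G : Type} {arF : F → ℕ} {arG : G → ℕ} (h : F → G)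
    (hh : ∀ f, arG (h f) = arF f) : Tm F arF → Tm G arG
  | .app f args => .app (h f) fun i => (args (Fin.cast (hh f) i)).rename h hh

/-- Equational consequence: `E ⊢ s = t` iff every structure satisfying all
equations of `E` also satisfies `s = t`. -/
def EqCons {F : Type} {ar : F → ℕ} (E : Set (Tm F ar × Tm F ar)) (s t : Tm F ar) : Prop :=
  ∀ M : Str F ar, (∀ e ∈ E, Tm.eval M e.1 = Tm.eval M e.2) → s.eval M = t.eval M

/-- Number of occurrences of the distinguished symbol `f` (the `Sum.inr` symbol) in a term. -/
def Tm.countF {F : Type} {ar : F → ℕ} {k : ℕ} : Tm (F ⊕ Unit) (fAr ar k) → ℕ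
  | .app (Sum.inl _) args => ∑ i, Tm.countF (args i)
  | .app (Sum.inr _) args => 1 + ∑ i, Tm.countF (args i)

/-- A literal: a (non-negated if `pos`, negated otherwise) equation between terms. -/
structure Lit (F : Type) (ar : F → ℕ) : Type where
  pos : Bool
  lhs : Tm F ar
  rhs : Tm F ar

def Lit.holds {F : Type} {ar : F → ℕ} (M : Str F ar) (l : Lit F ar) : Prop :=
  if l.pos then l.lhs.eval M = l.rhs.eval M else l.lhs.eval M ≠ l.rhs.eval M

/-- A clause: a disjunction of (possibly negated) equations, ITE-free by construction. -/
abbrev Clause (F : Type) (ar : F → ℕ) := List (Lit F ar)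

def Clause.holds {F : Type} {ar : F → ℕ} (M : Str F ar) (c : Clause F ar) : Prop :=
  ∃ l ∈ c, l.holds M

/-- A clause is valid if it holds in every nonempty structure. -/
def Clause.valid {F : Type} {ar : F → ℕ} (c : Clause F ar) : Prop :=
  ∀ M : Str F ar, c.holds M

/-- Number of occurrences of `f` in a literal (an equation). -/
def Lit.countF {F : Type} {ar : F → ℕ} {k : ℕ} (l : Lit (F ⊕ Unit) (fAr ar k)) : ℕ :=
  l.lhs.countF + l.rhs.countF

/-- Case-1 regular clause: every equation has at most one occurrence of `f`,
and `f` occurs only in non-negated equations. -/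
def Clause.Case1 {F : Type} {ar : F → ℕ} {k : ℕ} (c : Clause (F ⊕ Unit) (fAr ar k)) : Prop :=
  (∀ l ∈ c, l.countF ≤ 1) ∧ (∀ l ∈ c, l.pos = false → l.countF = 0)

/-- Case-2 regular clause: every equation has at most one occurrence of `f`, and `f`
occurs in exactly one negated equation of the clause and nowhere else. -/
def Clause.Case2 {F : Type} {ar : F → ℕ} {k : ℕ} (c : Clause (F ⊕ Unit) (fAr ar k)) : Prop :=
  (∀ l ∈ c, l.countF ≤ 1) ∧ (∀ l ∈ c, l.pos = true → l.countF = 0) ∧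
  (c.filter (fun l => l.pos = false ∧ l.countF ≠ 0)).length = 1

/-- A regular clause is one of case 1 or case 2. -/
def Clause.Regular {F : Type} {ar : F → ℕ} {k : ℕ} (c : Clause (F ⊕ Unit) (fAr ar k)) : Prop :=
  c.Case1 ∨ c.Case2

/-- Second-order substitution `·{w/f}` on literals. -/
def Lit.soSubst {F : Type} {ar : F → ℕ} {k : ℕ} (w : Tm (F ⊕ Fin k) (varAr ar k))
    (l : Lit (F ⊕ Unit) (fAr ar k)) : Lit F ar :=
  ⟨l.pos, Tm.soSubst w l.lhs, Tm.soSubst w l.rhs⟩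

/-- Second-order substitution `·{w/f}` on clauses. -/
def Clause.soSubst {F : Type} {ar : F → ℕ} {k : ℕ} (w : Tm (F ⊕ Fin k) (varAr ar k))
    (c : Clause (F ⊕ Unit) (fAr ar k)) : Clause F ar :=
  c.map (Lit.soSubst w)

/-- A regular-EUF formula: a finite conjunction of regular clauses. -/
structure RegEUF (F : Type) (ar : F → ℕ) (k : ℕ) : Type where
  clauses : List (Clause (F ⊕ Unit) (fAr ar k))
  regular : ∀ c ∈ clauses, c.Regular

/-- `w` is a solution for a regular-EUF formula if every clause becomes valid
after substituting `w` for `f`. -/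
def RegEUF.solves {F : Type} {ar : F → ℕ} {k : ℕ} (φ : RegEUF F ar k)
    (w : Tm (F ⊕ Fin k) (varAr ar k)) : Prop :=
  ∀ c ∈ φ.clauses, (c.soSubst w).valid

/-- Deterministic bottom-up tree automaton with a partial transition function. -/
structure DTA (F : Type) (ar : F → ℕ) : Type 1 where
  Q : Type
  [fintypeQ : Fintype Q]
  δ : (f : F) → (Fin (ar f) → Q) → Option Q
  final : Set Q

attribute [instance] DTA.fintypeQ

/-- Sequence a finite tuple of options. -/
def finSeq {Q : Type} : {n : ℕ} → (Fin n → Option Q) → Option (Fin n → Q)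
  | 0, _ => some (fun i => i.elim0)
  | _ + 1, f => (f 0).bind fun q => (finSeq fun i => f i.succ).map (Fin.cons q)

/-- The (partial) run of the automaton on a term: `δ` extended to terms. -/
def DTA.run {F : Type} {ar : F → ℕ} (A : DTA F ar) : Tm F ar → Option A.Q
  | .app f args => (finSeq fun i => A.run (args i)).bind fun qs => A.δ f qs

/-- The language accepted by the automaton. -/
def DTA.lang {F : Type} {ar : F → ℕ} (A : DTA F ar) : Set (Tm F ar) :=
  { t | ∃ q ∈ A.final, A.run t = some q }

/-- A tree language is regular if it is the language of some deterministic
bottom-up tree automaton. -/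
def IsRegularTreeLang {F : Type} {ar : F → ℕ} (L : Set (Tm F ar)) : Prop :=
  ∃ A : DTA F ar, L = A.lang
/-!
The negative literals of a case-1 clause `ψ` contain no `f`, so they form a fixed finite set `E`
of ground equations, and every positive literal of `ψ{w/f}` has an `f`-free side. Let `S` be the
finite set of subterms of the `f`-free sides, and let `M` be the quotient of `S` by provable
equality from `E`, with one extra junk element for values falling outside `S`. Then `M` satisfies
`E`, and `M ⊨ s = t` with `t` built from `S` forces `E ⊢ s = t`; hence `ψ{w/f}` is valid iff it
holds in `M`. Whether it holds in `M` depends only on the function `(Fin k → M) → M` denoted by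
`w`, and a bottom-up automaton whose states are these finitely many functions computes it.
-/

section Semantics

variable {F : Type} {ar : F → ℕ} {k : ℕ}

def Tm.denote (M : Str F ar) : Tm (F ⊕ Fin k) (varAr ar k) → (Fin k → M.D) → M.D
  | .app (Sum.inl g) args, ρ => M.interp g fun i => (args i).denote M ρ
  | .app (Sum.inr i) _, ρ => ρ i

def Str.expand (M : Str F ar) (φ : (Fin k → M.D) → M.D) : Str (F ⊕ Unit) (fAr ar k) where
  D := M.D
  interp
    | Sum.inl g => M.interp g
    | Sum.inr _ => φ

theorem Tm.eval_instVars (M : Str F ar) (σ : Fin k → Tm F ar) :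
    ∀ w : Tm (F ⊕ Fin k) (varAr ar k), (w.instVars σ).eval M = w.denote M fun i => (σ i).eval M
  | .app (Sum.inl g) args =>
    congrArg (M.interp g) (funext fun i => Tm.eval_instVars M σ (args i))
  | .app (Sum.inr _) _ => rfl

theorem Tm.eval_soSubst (M : Str F ar) (w : Tm (F ⊕ Fin k) (varAr ar k)) :
    ∀ t : Tm (F ⊕ Unit) (fAr ar k), (Tm.soSubst w t).eval M = t.eval (M.expand (w.denote M))
  | .app (Sum.inl g) args =>
    congrArg (M.interp g) (funext fun i => Tm.eval_soSubst M w (args i))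
  | .app (Sum.inr _) args =>
    (Tm.eval_instVars M _ w).trans
      (congrArg (w.denote M) (funext fun i => Tm.eval_soSubst M w (args i)))

theorem Clause.holds_soSubst_iff (M : Str F ar) (w : Tm (F ⊕ Fin k) (varAr ar k))
    (c : Clause (F ⊕ Unit) (fAr ar k)) :
    (c.soSubst w).holds M ↔ c.holds (M.expand (w.denote M)) := by
  simp only [Clause.holds, Clause.soSubst, List.mem_map, exists_exists_and_eq_and, Lit.holds,
    Lit.soSubst, Tm.eval_soSubst]
  rfl

end Semantics

section Automaton

variable {F : Type} {ar : F → ℕ} {k : ℕ}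

theorem finSeq_eq_some {Q : Type} :
    ∀ {n : ℕ} {f : Fin n → Option Q} {v : Fin n → Q}, (∀ i, f i = some (v i)) → finSeq f = some v
  | 0, _, _, _ => congrArg some (funext fun i => i.elim0)
  | _ + 1, _, v, h => by
    simp only [finSeq, h 0, Option.bind_some, finSeq_eq_some fun i => h i.succ, Option.map_some]
    exact congrArg some (Fin.cons_self_tail v)

noncomputable def denoteDTA (M : Str F ar) [Finite M.D] (P : ((Fin k → M.D) → M.D) → Prop) :
    DTA (F ⊕ Fin k) (varAr ar k) where
  Q := (Fin k → M.D) → M.D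
  fintypeQ := Fintype.ofFinite _
  δ
    | Sum.inl g, qs => some fun ρ => M.interp g fun i => qs i ρ
    | Sum.inr i, _ => some fun ρ => ρ i
  final := {φ | P φ}

theorem denoteDTA_run (M : Str F ar) [Finite M.D] (P : ((Fin k → M.D) → M.D) → Prop) :
    ∀ w : Tm (F ⊕ Fin k) (varAr ar k), (denoteDTA M P).run w = some (w.denote M)
  | .app s args => by
    rw [DTA.run, finSeq_eq_some fun i => denoteDTA_run M P (args i)]
    cases s <;> rfl

theorem isRegularTreeLang_denote (M : Str F ar) [Finite M.D]
    (P : ((Fin k → M.D) → M.D) → Prop) :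
    IsRegularTreeLang {w : Tm (F ⊕ Fin k) (varAr ar k) | P (w.denote M)} :=
  ⟨denoteDTA M P, Set.ext fun w => by
    simp only [DTA.lang, Set.mem_ofPred_eq, denoteDTA_run]
    exact ⟨fun h => ⟨_, h, rfl⟩, fun ⟨_, h, hq⟩ => Option.some.inj hq ▸ h⟩⟩

end Automaton

section QuotientModel

variable {F : Type} {ar : F → ℕ}

namespace EqCons

variable {E : Set (Tm F ar × Tm F ar)} {s t u : Tm F ar}

theorem refl (E : Set (Tm F ar × Tm F ar)) (t : Tm F ar) : EqCons E t t :=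
  fun _ _ => rfl

theorem symm (h : EqCons E s t) : EqCons E t s :=
  fun M hM => (h M hM).symm

theorem trans (h₁ : EqCons E s t) (h₂ : EqCons E t u) : EqCons E s u :=
  fun M hM => (h₁ M hM).trans (h₂ M hM)

theorem app_congr (g : F) {a b : Fin (ar g) → Tm F ar} (h : ∀ i, EqCons E (a i) (b i)) :
    EqCons E (.app g a) (.app g b) :=
  fun M hM => congrArg (M.interp g) (funext fun i => h i M hM)

def setoid (E : Set (Tm F ar × Tm F ar)) (S : Set (Tm F ar)) : Setoid S :=
  ⟨fun a b => EqCons E a b, ⟨fun a => refl E a, symm, trans⟩⟩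

end EqCons

def Tm.subterms : Tm F ar → Set (Tm F ar)
  | .app g args => insert (.app g args) (⋃ i, (args i).subterms)

theorem Tm.mem_subterms_self : ∀ t : Tm F ar, t ∈ t.subterms
  | .app _ _ => Set.mem_insert _ _

theorem Tm.finite_subterms : ∀ t : Tm F ar, t.subterms.Finite
  | .app _ args => (Set.finite_iUnion fun i => (args i).finite_subterms).insert _

theorem Tm.subterms_arg_subset {g : F} {args : Fin (ar g) → Tm F ar} (i : Fin (ar g)) :
    (args i).subterms ⊆ (Tm.app g args).subterms :=
  fun _ hx => Set.mem_insert_of_mem _ (Set.mem_iUnion.mpr ⟨i, hx⟩)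

variable (E : Set (Tm F ar × Tm F ar)) (S : Set (Tm F ar))

open Classical in
/-- Applying `g` to classes of terms `us i ∈ S` gives the class of any `v ∈ S` with
`E ⊢ g(us) = v`, and the junk value `none` when there is no such `v`. -/
noncomputable def quotInterp (g : F) (ds : Fin (ar g) → Option (Quotient (EqCons.setoid E S))) :
    Option (Quotient (EqCons.setoid E S)) :=
  if h : ∃ (us : Fin (ar g) → S) (v : S),
      (∀ i, ds i = some (Quotient.mk _ (us i))) ∧ EqCons E (.app g fun i => us i) v
  then some (Quotient.mk _ h.choose_spec.choose) else none

noncomputable def quotModel : Str F ar where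
  D := Option (Quotient (EqCons.setoid E S))
  nonemptyD := ⟨none⟩
  interp := quotInterp E S

theorem quotModel_finite (hS : S.Finite) : Finite (quotModel E S).D :=
  have : Finite S := hS.to_subtype
  inferInstanceAs (Finite (Option (Quotient (EqCons.setoid E S))))

variable {E S}

theorem quotInterp_of_eqCons {g : F} {ds : Fin (ar g) → Option (Quotient (EqCons.setoid E S))}
    (us : Fin (ar g) → S) (v : S) (hds : ∀ i, ds i = some (Quotient.mk _ (us i)))
    (hv : EqCons E (.app g fun i => us i) v) :
    quotInterp E S g ds = some (Quotient.mk _ v) := by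
  have h : ∃ (us : Fin (ar g) → S) (v : S),
      (∀ i, ds i = some (Quotient.mk _ (us i))) ∧ EqCons E (.app g fun i => us i) v :=
    ⟨us, v, hds, hv⟩
  rw [quotInterp, dif_pos h]
  obtain ⟨hds', hv'⟩ := h.choose_spec.choose_spec
  have hus : ∀ i, EqCons E (h.choose i) (us i) := fun i =>
    Quotient.exact (Option.some.inj ((hds' i).symm.trans (hds i)))
  exact congrArg some (Quotient.sound ((hv'.symm.trans (EqCons.app_congr g hus)).trans hv))

theorem exists_eqCons_of_quotInterp_eq_some {g : F}
    {ds : Fin (ar g) → Option (Quotient (EqCons.setoid E S))} {c : Quotient (EqCons.setoid E S)}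
    (h : quotInterp E S g ds = some c) :
    ∃ (us : Fin (ar g) → S) (v : S), (∀ i, ds i = some (Quotient.mk _ (us i))) ∧
      EqCons E (.app g fun i => us i) v ∧ c = Quotient.mk _ v := by
  rw [quotInterp] at h
  split at h
  · next hex =>
    obtain ⟨hds, hv⟩ := hex.choose_spec.choose_spec
    exact ⟨hex.choose, hex.choose_spec.choose, hds, hv, (Option.some.inj h).symm⟩
  · exact absurd h (Option.some_ne_none c).symm

theorem eval_quotModel : ∀ {t : Tm F ar} (ht : t.subterms ⊆ S),
    t.eval (quotModel E S) = some (Quotient.mk _ ⟨t, ht t.mem_subterms_self⟩)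
  | .app _ args, ht =>
    have hargs i : (args i).subterms ⊆ S := (Tm.subterms_arg_subset i).trans ht
    quotInterp_of_eqCons (fun i => ⟨args i, hargs i (args i).mem_subterms_self⟩) _
      (fun i => eval_quotModel (hargs i)) (EqCons.refl E _)

theorem eqCons_of_eval_quotModel : ∀ {t : Tm F ar} (v : S),
    t.eval (quotModel E S) = some (Quotient.mk _ v) → EqCons E t v
  | .app g args, v, h => by
    obtain ⟨us, v', hargs, hv', hvv'⟩ := exists_eqCons_of_quotInterp_eq_some h
    have hargs' i : EqCons E (args i) (us i) := eqCons_of_eval_quotModel (us i) (hargs i)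
    exact ((EqCons.app_congr g hargs').trans hv').trans (Quotient.exact hvv').symm

theorem eqCons_of_eval_quotModel_eq {t u : Tm F ar} (hu : u.subterms ⊆ S)
    (h : t.eval (quotModel E S) = u.eval (quotModel E S)) : EqCons E t u :=
  eqCons_of_eval_quotModel _ (h.trans (eval_quotModel hu))

theorem quotModel_satisfies (hE : ∀ e ∈ E, e.1.subterms ⊆ S ∧ e.2.subterms ⊆ S) :
    ∀ e ∈ E, e.1.eval (quotModel E S) = e.2.eval (quotModel E S) := fun e he => by
  rw [eval_quotModel (hE e he).1, eval_quotModel (hE e he).2]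
  exact congrArg some (Quotient.sound fun M hM => hM e he)

/-- A structure violating `E` satisfies a negative literal; in a model of `E`, a positive literal
true in the quotient model is a consequence of `E` because one of its sides is built from `S`. -/
theorem Clause.valid_iff_holds_quotModel {c : Clause F ar}
    (hE : ∀ p q, (p, q) ∈ E ↔ ⟨false, p, q⟩ ∈ c)
    (hneg : ∀ l ∈ c, l.pos = false → l.lhs.subterms ⊆ S ∧ l.rhs.subterms ⊆ S)
    (hpos : ∀ l ∈ c, l.pos = true → l.lhs.subterms ⊆ S ∨ l.rhs.subterms ⊆ S) :
    c.valid ↔ c.holds (quotModel E S) := by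
  refine ⟨fun h => h _, fun ⟨l, hl, hlM⟩ M => ?_⟩
  by_cases hM : ∀ e ∈ E, e.1.eval M = e.2.eval M
  · refine ⟨l, hl, ?_⟩
    cases hl_pos : l.pos
    · have hlE : (l.lhs, l.rhs) ∈ E := (hE _ _).2 (by rw [← hl_pos]; exact hl)
      have hEM := quotModel_satisfies (fun e he => hneg _ ((hE e.1 e.2).1 he) rfl) _ hlE
      simp only [Lit.holds, hl_pos] at hlM
      exact absurd hEM hlM
    · simp only [Lit.holds, hl_pos, if_true] at hlM ⊢
      rcases hpos l hl hl_pos with h | h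
      · exact (eqCons_of_eval_quotModel_eq h hlM.symm M hM).symm
      · exact eqCons_of_eval_quotModel_eq h hlM M hM
  · push Not at hM
    obtain ⟨⟨p, q⟩, he, hne⟩ := hM
    exact ⟨_, (hE p q).1 he, hne⟩

end QuotientModel

section Case1

variable {F : Type} {ar : F → ℕ} {k : ℕ}

theorem Tm.soSubst_eq_of_countF_eq_zero :
    ∀ {t : Tm (F ⊕ Unit) (fAr ar k)}, t.countF = 0 → ∀ w w', Tm.soSubst w t = Tm.soSubst w' t
  | .app (Sum.inl g) args, h, w, w' => congrArg (Tm.app g) (funext fun i =>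
      soSubst_eq_of_countF_eq_zero (Finset.sum_eq_zero_iff.mp h i (Finset.mem_univ i)) w w')
  | .app (Sum.inr _) _, h, _, _ => absurd h (by simp [Tm.countF])

theorem Lit.soSubst_eq_of_countF_eq_zero {l : Lit (F ⊕ Unit) (fAr ar k)} (h : l.countF = 0)
    (w w' : Tm (F ⊕ Fin k) (varAr ar k)) : l.soSubst w = l.soSubst w' := by
  obtain ⟨hlhs, hrhs⟩ := Nat.add_eq_zero_iff.mp h
  simp only [Lit.soSubst, Tm.soSubst_eq_of_countF_eq_zero hlhs w w',
    Tm.soSubst_eq_of_countF_eq_zero hrhs w w']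

/-- The common value of all `t{w/f}` when `t` is `f`-free; empty if `t` contains `f`, and also
when there is no `w` at all. -/
def Tm.fFreeImage (t : Tm (F ⊕ Unit) (fAr ar k)) : Set (Tm F ar) :=
  {p | t.countF = 0 ∧ ∃ w, Tm.soSubst w t = p}

theorem Tm.fFreeImage_subsingleton (t : Tm (F ⊕ Unit) (fAr ar k)) :
    t.fFreeImage.Subsingleton := by
  rintro _ ⟨h, w, rfl⟩ _ ⟨-, w', rfl⟩
  exact Tm.soSubst_eq_of_countF_eq_zero h w w'

def Clause.fFreeSubterms (ψ : Clause (F ⊕ Unit) (fAr ar k)) : Set (Tm F ar) :=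
  ⋃ l ∈ {l | l ∈ ψ}, ⋃ p ∈ l.lhs.fFreeImage ∪ l.rhs.fFreeImage, p.subterms

theorem Clause.finite_fFreeSubterms (ψ : Clause (F ⊕ Unit) (fAr ar k)) :
    ψ.fFreeSubterms.Finite :=
  ψ.finite_toSet.biUnion fun l _ =>
    (l.lhs.fFreeImage_subsingleton.finite.union l.rhs.fFreeImage_subsingleton.finite).biUnion
      fun p _ => p.finite_subterms

theorem Clause.subterms_soSubst_subset {ψ : Clause (F ⊕ Unit) (fAr ar k)}
    {l : Lit (F ⊕ Unit) (fAr ar k)} (hl : l ∈ ψ) {t : Tm (F ⊕ Unit) (fAr ar k)}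
    (ht : t = l.lhs ∨ t = l.rhs) (h : t.countF = 0) (w : Tm (F ⊕ Fin k) (varAr ar k)) :
    (Tm.soSubst w t).subterms ⊆ ψ.fFreeSubterms :=
  fun _ hu => Set.mem_biUnion (x := l) hl <| Set.mem_biUnion (x := Tm.soSubst w t)
    (by rcases ht with rfl | rfl; exacts [Or.inl ⟨h, w, rfl⟩, Or.inr ⟨h, w, rfl⟩]) hu

/-- For a case-1 clause the negative literals of `ψ{w/f}` do not depend on `w`. -/
def Clause.negEqs (ψ : Clause (F ⊕ Unit) (fAr ar k)) : Set (Tm F ar × Tm F ar) :=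
  {e | ∃ w, ⟨false, e.1, e.2⟩ ∈ ψ.soSubst w}

theorem Clause.Case1.valid_soSubst_iff {ψ : Clause (F ⊕ Unit) (fAr ar k)} (hψ : ψ.Case1)
    (w : Tm (F ⊕ Fin k) (varAr ar k)) :
    (ψ.soSubst w).valid ↔ (ψ.soSubst w).holds (quotModel ψ.negEqs ψ.fFreeSubterms) := by
  obtain ⟨hle, hneg⟩ := hψ
  apply Clause.valid_iff_holds_quotModel
  · refine fun p q => ⟨fun ⟨w', h⟩ => ?_, fun h => ⟨w, h⟩⟩
    obtain ⟨l, hl, hlw'⟩ := List.mem_map.mp h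
    have hpos : l.pos = false := congrArg Lit.pos hlw'
    rw [← hlw', Lit.soSubst_eq_of_countF_eq_zero (hneg l hl hpos) w' w]
    exact List.mem_map_of_mem hl
  · rintro _ hl' hpos
    obtain ⟨l, hl, rfl⟩ := List.mem_map.mp hl'
    obtain ⟨hlhs, hrhs⟩ := Nat.add_eq_zero_iff.mp (hneg l hl hpos)
    exact ⟨Clause.subterms_soSubst_subset hl (.inl rfl) hlhs w,
      Clause.subterms_soSubst_subset hl (.inr rfl) hrhs w⟩
  · rintro _ hl' -
    obtain ⟨l, hl, rfl⟩ := List.mem_map.mp hl'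
    have hfree : l.lhs.countF = 0 ∨ l.rhs.countF = 0 := by
      have := hle l hl
      simp only [Lit.countF] at this
      omega
    exact hfree.imp (Clause.subterms_soSubst_subset hl (.inl rfl) · w)
      (Clause.subterms_soSubst_subset hl (.inr rfl) · w)

end Case1

theorem case1_solutions_regular_general {F : Type} (ar : F → ℕ) (k : ℕ)
    (ψ : Clause (F ⊕ Unit) (fAr ar k)) (hψ : ψ.Case1) :
    IsRegularTreeLang {w : Tm (F ⊕ Fin k) (varAr ar k) | (ψ.soSubst w).valid} := by
  have := quotModel_finite ψ.negEqs _ ψ.finite_fFreeSubterms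
  simp only [hψ.valid_soSubst_iff, Clause.holds_soSubst_iff]
  exact isRegularTreeLang_denote _ fun φ => ψ.holds (Str.expand _ φ)

/-- For a finite signature `Σ = (F, ar)`, a fresh function symbol `f`
of arity `k`, and a case-1 regular clause (each equation contains at most one occurrence of `f`, and `f` occurs only in non-negated equations), the set of candidate expressions
`w ∈ T(Σ, {x₁,…,x_k})` such that `ψ{w/f}` is valid is a regular tree language over
`Σ ∪ {x₁,…,x_k}` (with the variables treated as constants). -/
theorem case1_solutions_regular {F : Type} [Fintype F] (ar : F → ℕ) (k : ℕ)
    (ψ : Clause (F ⊕ Unit) (fAr ar k)) (hψ : ψ.Case1) :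
    IsRegularTreeLang {w : Tm (F ⊕ Fin k) (varAr ar k) | (ψ.soSubst w).valid} :=
  case1_solutions_regular_general ar k ψ hψ

end SyGuS
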